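/- For every integer n ≥ 1, every IR(G_n)-set contains exactly one of the vertices u and v, and exactly two vertices from each set S_i, i = 1, ..., n. -/

import Mathlib

open SimpleGraph

section IRDefs

variable {V : Type*}

/-- `w` is a `D`-private neighbour of `v`: `w` is dominated by `v` but by no other
vertex of `D`. -/
def IsPrivateNbr (G : SimpleGraph V) (D : Set V) (v w : V) : Prop :=
  (w = v ∨ G.Adj v w) ∧ ∀ u ∈ D, u ≠ v → ¬(w = u ∨ G.Adj u w)

/-- The set `PN(v, D)` of `D`-private neighbours of `v`. -/
def PN (G : SimpleGraph V) (v : V) (D : Set V) : Set V := {w | IsPrivateNbr G D v w}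

/-- The set `EPN(v, D) = PN(v, D) − D` of external `D`-private neighbours of `v`. -/
def EPN (G : SimpleGraph V) (v : V) (D : Set V) : Set V := PN G v D \ D

/-- A set `D` is irredundant if every vertex of `D` has a `D`-private neighbour. -/
def Irredundant (G : SimpleGraph V) (D : Set V) : Prop := ∀ v ∈ D, (PN G v D).Nonempty

/-- The upper irredundance number `IR(G)`. -/
noncomputable def IRnum (G : SimpleGraph V) : ℕ :=
  sSup {n | ∃ D : Set V, Irredundant G D ∧ D.ncard = n}

/-- An `IR(G)`-set: an irredundant set of maximum cardinality `IR(G)`. -/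
def IsIRSet (G : SimpleGraph V) (D : Set V) : Prop :=
  Irredundant G D ∧ D.ncard = IRnum G

/-- The `IR`-graph of `G`: vertices are the `IR(G)`-sets, and `D` is adjacent to `D'`
iff `D' = (D − {u}) ∪ {v}` for some `u ∈ D` and `v ∈ D' − {u}` with `uv ∈ E(G)`. -/
def IRGraph (G : SimpleGraph V) [Fintype V] :
    SimpleGraph {D : Set V // IsIRSet G D} where
  Adj D D' := ∃ a b, a ∈ D.1 ∧ b ∈ D'.1 ∧ b ≠ a ∧ G.Adj a b ∧ D'.1 = (D.1 \ {a}) ∪ {b}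
  symm := by
    constructor
    rintro ⟨D, hD⟩ ⟨D', hD'⟩ ⟨a, b, ha, hb, hba, hadj, heq⟩
    dsimp only at ha hb heq ⊢
    have hbD : b ∉ D := by
      intro hbD
      have h1 : D' = D \ {a} := by
        rw [heq]
        ext x
        simp only [Set.mem_union, Set.mem_diff, Set.mem_singleton_iff]
        constructor
        · rintro (h | rfl)
          · exact h
          · exact ⟨hbD, hba⟩
        · exact Or.inl
      have h2 : D'.ncard = D.ncard - 1 := by
        rw [h1, Set.ncard_diff_singleton_of_mem ha]
      have h3 : D.ncard = D'.ncard := by rw [hD.2, hD'.2]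
      have h4 : 0 < D.ncard := (Set.ncard_pos (Set.toFinite D)).2 ⟨a, ha⟩
      omega
    refine ⟨b, a, hb, ha, fun h => hba h.symm, hadj.symm, ?_⟩
    rw [heq]
    ext x
    simp only [Set.mem_union, Set.mem_diff, Set.mem_singleton_iff]
    constructor
    · intro hx
      by_cases hxa : x = a
      · exact Or.inr hxa
      · have hxb : x ≠ b := fun h => hbD (h ▸ hx)
        exact Or.inl ⟨Or.inl ⟨hx, hxa⟩, hxb⟩
    · rintro (⟨(⟨hx, _⟩ | rfl), hxb⟩ | rfl)
      · exact hx
      · exact absurd rfl hxb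
      · exact ha
  loopless := by
    constructor
    rintro ⟨D, hD⟩ ⟨a, b, ha, hb, hba, hadj, heq⟩
    dsimp only at ha hb heq
    have h2 : a ∈ (D \ {a}) ∪ {b} := heq ▸ ha
    rcases h2 with h | h
    · exact h.2 rfl
    · exact hba h.symm

end IRDefs

/-- The vertices of the graph `Gₙ`. -/
inductive GVert (n : ℕ) : Type
  | u : GVert n
  | v : GVert n
  | a : Fin n → GVert n
  | b : Fin n → GVert n
  | c : Fin n → GVert n
  | d : Fin n → GVert n
  deriving DecidableEq, Fintype

/-- The graph `Gₙ`: edges `uv`, `u aᵢ` for all `i`, `v bᵢ` for all `i`,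
`aᵢ bⱼ` for all `i ≠ j`, and, for each `i`, the 4-cycle `(aᵢ, cᵢ, bᵢ, dᵢ, aᵢ)`. -/
def Gn (n : ℕ) : SimpleGraph (GVert n) :=
  SimpleGraph.fromRel (fun x y =>
    (x = .u ∧ y = .v) ∨
    (∃ i, x = .u ∧ y = .a i) ∨
    (∃ i, x = .v ∧ y = .b i) ∨
    (∃ i j, i ≠ j ∧ x = .a i ∧ y = .b j) ∨
    (∃ i, x = .a i ∧ y = .c i) ∨
    (∃ i, x = .c i ∧ y = .b i) ∨
    (∃ i, x = .b i ∧ y = .d i) ∨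
    (∃ i, x = .d i ∧ y = .a i))

/-- `Sᵢ = {aᵢ, bᵢ, cᵢ, dᵢ}`. -/
def Sset (n : ℕ) (i : Fin n) : Set (GVert n) := {.a i, .b i, .c i, .d i}

/-
An irredundant set `Z` of `Gₙ` meets each `Sᵢ` in at most two vertices: if `cᵢ ∈ Z` (or `dᵢ`),
any two further vertices of `Sᵢ` dominate its whole closed neighbourhood `{aᵢ, bᵢ, cᵢ}`.
If `u, v ∈ Z`, their private neighbours are some `aᵢ` and `bₖ`, and keeping them private removes
two more vertices of `⋃ Sⱼ` from `Z`, so `|Z| ≤ 2n`. Hence `IR(Gₙ) = 2n + 1`, attained by the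
independent set `{u} ∪ C ∪ D`, and an `IR`-set reaches this bound only by containing exactly one
of `u, v` and exactly two vertices of every `Sᵢ`.
-/

section Irredundance

variable {V : Type*} {G : SimpleGraph V} {D : Set V}

theorem SimpleGraph.IsIndepSet.irredundant (hD : G.IsIndepSet D) : Irredundant G D :=
  fun v hv => ⟨v, Or.inl rfl, fun _ hw hwv hdom =>
    hdom.elim (fun h => hwv h.symm) (hD hw hv hwv)⟩

theorem IsPrivateNbr.notMem {w p : V} (hp : IsPrivateNbr G D w p) (hpw : p ≠ w) : p ∉ D :=
  fun hpD => hp.2 p hpD hpw (Or.inl rfl)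

theorem IsPrivateNbr.notMem_of_adj {w p z : V} (hp : IsPrivateNbr G D w p) (hzp : G.Adj z p)
    (hzw : z ≠ w) : z ∉ D :=
  fun hzD => hp.2 z hzD hzw (Or.inr hzp)

/-- The private neighbour of `w` is `w`, `x` or `y`, and each choice keeps two of `x, y, w'`
out of `D`. -/
theorem Irredundant.ncard_inter_le_two_of_twin {w w' x y : V} (hD : Irredundant G D)
    (hw : w ∈ D) (hN : ∀ z, G.Adj w z ↔ z = x ∨ z = y) (hx : G.Adj w' x) (hy : G.Adj w' y)
    (hw'w : w' ≠ w) : (D ∩ {w, x, y, w'}).ncard ≤ 2 := by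
  obtain ⟨p, hp⟩ := hD w hw
  have hwx : G.Adj w x := (hN x).2 (Or.inl rfl)
  have hwy : G.Adj w y := (hN y).2 (Or.inr rfl)
  have hsingle : ∃ z, D ∩ {x, y, w'} ⊆ {z} := by
    rcases hp.1 with hpw | hwp
    · subst hpw
      refine ⟨w', ?_⟩
      rintro z ⟨hz, rfl | rfl | rfl⟩
      · exact absurd hz (hp.notMem_of_adj hwx.symm hwx.ne')
      · exact absurd hz (hp.notMem_of_adj hwy.symm hwy.ne')
      · rfl
    rcases (hN p).1 hwp with rfl | rfl
    · refine ⟨y, ?_⟩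
      rintro z ⟨hz, rfl | rfl | rfl⟩
      · exact absurd hz (hp.notMem hwx.ne')
      · rfl
      · exact absurd hz (hp.notMem_of_adj hx hw'w)
    · refine ⟨x, ?_⟩
      rintro z ⟨hz, rfl | rfl | rfl⟩
      · rfl
      · exact absurd hz (hp.notMem hwy.ne')
      · exact absurd hz (hp.notMem_of_adj hy hw'w)
  obtain ⟨z, hz⟩ := hsingle
  rw [Set.inter_insert_of_mem hw]
  calc _ ≤ (D ∩ {x, y, w'}).ncard + 1 := Set.ncard_insert_le _ _
    _ ≤ 1 + 1 := by grw [Set.ncard_le_ncard hz, Set.ncard_singleton]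

theorem IRnum_eq_of_forall_ncard_le {m : ℕ} (hD : Irredundant G D) (hDm : D.ncard = m)
    (hle : ∀ D', Irredundant G D' → D'.ncard ≤ m) : IRnum G = m :=
  IsGreatest.csSup_eq ⟨⟨D, hD, hDm⟩, by rintro _ ⟨D', hD', rfl⟩; exact hle D' hD'⟩

end Irredundance

namespace Gn

variable {n : ℕ} {Z : Set (GVert n)}

theorem adj_u_iff (z : GVert n) : (Gn n).Adj .u z ↔ z = .v ∨ ∃ i, z = .a i := by
  cases z <;> simp [Gn]

theorem adj_v_iff (z : GVert n) : (Gn n).Adj .v z ↔ z = .u ∨ ∃ i, z = .b i := by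
  cases z <;> simp [Gn]

theorem adj_c_iff (i : Fin n) (z : GVert n) : (Gn n).Adj (.c i) z ↔ z = .a i ∨ z = .b i := by
  cases z <;> simp [Gn, eq_comm]

theorem adj_d_iff (i : Fin n) (z : GVert n) : (Gn n).Adj (.d i) z ↔ z = .a i ∨ z = .b i := by
  cases z <;> simp [Gn, eq_comm]

def part : GVert n → Option (Fin n)
  | .u | .v => none
  | .a i | .b i | .c i | .d i => some i

theorem ncard_eq_add_sum (Z : Set (GVert n)) :
    Z.ncard = (Z ∩ {.u, .v}).ncard + ∑ i, (Z ∩ Sset n i).ncard := by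
  classical
  have hfiber : ∀ o : Option (Fin n), ∀ T : Set (GVert n), (∀ x, x ∈ T ↔ part x = o) →
      (Z ∩ T).ncard = {x ∈ Z.toFinset | part x = o}.card := by
    intro o T hT
    rw [Set.ncard_eq_toFinset_card']
    congr 1
    ext x
    simp [hT]
  rw [Set.ncard_eq_toFinset_card', Finset.card_eq_sum_card_fiberwise (t := Finset.univ)
    (fun x _ => Finset.mem_coe.2 (Finset.mem_univ (part x))), Fintype.sum_option,
    hfiber none _ (by intro x; cases x <;> simp [part])]
  congr 1
  refine Finset.sum_congr rfl fun i _ => (hfiber (some i) _ ?_).symm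
  intro x
  cases x <;> simp [part, Sset, eq_comm]

open scoped Classical in
theorem ncard_inter_u_v (Z : Set (GVert n)) :
    (Z ∩ {.u, .v}).ncard = (if .u ∈ Z then 1 else 0) + (if .v ∈ Z then 1 else 0) := by
  by_cases hu : GVert.u ∈ Z <;> by_cases hv : GVert.v ∈ Z <;>
    simp [hu, hv, Set.inter_insert_of_mem, Set.inter_insert_of_notMem]

theorem ncard_inter_Sset_le_two (hZ : Irredundant (Gn n) Z) (i : Fin n) :
    (Z ∩ Sset n i).ncard ≤ 2 := by
  by_cases hc : GVert.c i ∈ Z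
  · have hS : Sset n i = {.c i, .a i, .b i, .d i} := by ext; simp [Sset]; tauto
    rw [hS]
    exact hZ.ncard_inter_le_two_of_twin hc (adj_c_iff i) (by simp [Gn]) (by simp [Gn]) (by simp)
  by_cases hd : GVert.d i ∈ Z
  · have hS : Sset n i = {.d i, .a i, .b i, .c i} := by ext; simp [Sset]; tauto
    rw [hS]
    exact hZ.ncard_inter_le_two_of_twin hd (adj_d_iff i) (by simp [Gn]) (by simp [Gn]) (by simp)
  have hab : Z ∩ Sset n i ⊆ {.a i, .b i} := by
    rintro x ⟨hx, rfl | rfl | rfl | rfl⟩ <;> simp_all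
  grw [Set.ncard_le_ncard hab]
  exact (Set.ncard_insert_le _ _).trans (by simp)

theorem sum_ncard_inter_Sset_le (hZ : Irredundant (Gn n) Z) :
    ∑ i, (Z ∩ Sset n i).ncard ≤ 2 * n := by
  grw [Finset.sum_le_sum fun i _ => ncard_inter_Sset_le_two hZ i]
  simp [mul_comm]

theorem exists_isPrivateNbr_u (hZ : Irredundant (Gn n) Z) (hu : .u ∈ Z) (hv : .v ∈ Z) :
    ∃ i, IsPrivateNbr (Gn n) Z .u (.a i) := by
  obtain ⟨p, hp⟩ := hZ _ hu
  rcases hp.1 with rfl | hup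
  · exact absurd hv (hp.notMem_of_adj (by simp [Gn]) (by simp))
  rcases (adj_u_iff p).1 hup with rfl | ⟨i, rfl⟩
  · exact absurd hv (hp.notMem (by simp))
  · exact ⟨i, hp⟩

theorem exists_isPrivateNbr_v (hZ : Irredundant (Gn n) Z) (hu : .u ∈ Z) (hv : .v ∈ Z) :
    ∃ k, IsPrivateNbr (Gn n) Z .v (.b k) := by
  obtain ⟨p, hp⟩ := hZ _ hv
  rcases hp.1 with rfl | hvp
  · exact absurd hu (hp.notMem_of_adj (by simp [Gn]) (by simp))
  rcases (adj_v_iff p).1 hvp with rfl | ⟨k, rfl⟩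
  · exact absurd hu (hp.notMem (by simp))
  · exact ⟨k, hp⟩

/-- Keeping `aᵢ` private to `u` removes `aᵢ, cᵢ, dᵢ` and every `bⱼ` with `j ≠ i` from `Z`;
symmetrically for `bₖ` and `v`. -/
theorem ncard_inter_Sset_add_le (hZ : Irredundant (Gn n) Z) {i k : Fin n}
    (hi : IsPrivateNbr (Gn n) Z .u (.a i)) (hk : IsPrivateNbr (Gn n) Z .v (.b k)) (j : Fin n) :
    (Z ∩ Sset n j).ncard + (if j = i then 1 else 0) + (if j = k then 1 else 0) ≤ 2 := by
  have hai : GVert.a i ∉ Z := hi.notMem (by simp)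
  have hci : GVert.c i ∉ Z := hi.notMem_of_adj (by simp [Gn]) (by simp)
  have hdi : GVert.d i ∉ Z := hi.notMem_of_adj (by simp [Gn]) (by simp)
  have hbk : GVert.b k ∉ Z := hk.notMem (by simp)
  have hck : GVert.c k ∉ Z := hk.notMem_of_adj (by simp [Gn]) (by simp)
  have hdk : GVert.d k ∉ Z := hk.notMem_of_adj (by simp [Gn]) (by simp)
  by_cases hji : j = i <;> by_cases hjk : j = k
  · subst hji hjk
    have hempty : Z ∩ Sset n j ⊆ ∅ := by
      rintro x ⟨hx, rfl | rfl | rfl | rfl⟩ <;> simp_all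
    simp [Set.subset_empty_iff.1 hempty]
  · subst hji
    have hb : Z ∩ Sset n j ⊆ {.b j} := by
      rintro x ⟨hx, rfl | rfl | rfl | rfl⟩ <;> simp_all
    grw [Set.ncard_le_ncard hb]
    simp [hjk]
  · subst hjk
    have ha : Z ∩ Sset n j ⊆ {.a j} := by
      rintro x ⟨hx, rfl | rfl | rfl | rfl⟩ <;> simp_all
    grw [Set.ncard_le_ncard ha]
    simp [hji]
  · simpa [hji, hjk] using ncard_inter_Sset_le_two hZ j

theorem ncard_le_of_mem_u_of_mem_v (hZ : Irredundant (Gn n) Z) (hu : .u ∈ Z) (hv : .v ∈ Z) :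
    Z.ncard ≤ 2 * n := by
  obtain ⟨i, hi⟩ := exists_isPrivateNbr_u hZ hu hv
  obtain ⟨k, hk⟩ := exists_isPrivateNbr_v hZ hu hv
  have hsum := Finset.sum_le_sum fun j (_ : j ∈ Finset.univ) => ncard_inter_Sset_add_le hZ hi hk j
  simp only [Finset.sum_add_distrib, Finset.sum_ite_eq', Finset.mem_univ, if_true,
    Finset.sum_const, Finset.card_univ, Fintype.card_fin, smul_eq_mul] at hsum
  rw [ncard_eq_add_sum, ncard_inter_u_v]
  simp only [hu, hv, if_true]
  omega

theorem ncard_le_of_irredundant (hZ : Irredundant (Gn n) Z) : Z.ncard ≤ 2 * n + 1 := by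
  by_cases huv : GVert.u ∈ Z ∧ GVert.v ∈ Z
  · exact (ncard_le_of_mem_u_of_mem_v hZ huv.1 huv.2).trans (Nat.le_succ _)
  have := sum_ncard_inter_Sset_le hZ
  rw [ncard_eq_add_sum, ncard_inter_u_v]
  split_ifs <;> simp_all <;> omega

def uCD (n : ℕ) : Set (GVert n) := {x | x = .u ∨ ∃ i, x = .c i ∨ x = .d i}

theorem isIndepSet_uCD : (Gn n).IsIndepSet (uCD n) := by
  rintro x (rfl | ⟨i, rfl | rfl⟩) y (rfl | ⟨j, rfl | rfl⟩) - <;> simp [Gn]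

theorem ncard_uCD : (uCD n).ncard = 2 * n + 1 := by
  have hS : ∀ i, uCD n ∩ Sset n i = {.c i, .d i} := by
    intro i; ext x; cases x <;> simp [uCD, Sset, eq_comm]
  have hu : GVert.u ∈ uCD n := Or.inl rfl
  have hv : GVert.v ∉ uCD n := by simp [uCD]
  rw [ncard_eq_add_sum, ncard_inter_u_v]
  simp [hS, hu, hv, add_comm, mul_comm]

theorem IRnum_eq : IRnum (Gn n) = 2 * n + 1 :=
  IRnum_eq_of_forall_ncard_le isIndepSet_uCD.irredundant ncard_uCD
    fun _ => ncard_le_of_irredundant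

end Gn

theorem statement7_general (n : ℕ) (Z : Set (GVert n))
    (hZ : IsIRSet (Gn n) Z) :
    ((GVert.u ∈ Z ∧ GVert.v ∉ Z) ∨ (GVert.u ∉ Z ∧ GVert.v ∈ Z)) ∧
      ∀ i : Fin n, (Z ∩ Sset n i).ncard = 2 := by
  obtain ⟨hirr, hcard⟩ := hZ
  rw [Gn.IRnum_eq] at hcard
  have hnot_both : ¬ (GVert.u ∈ Z ∧ GVert.v ∈ Z) := fun h => by
    have := Gn.ncard_le_of_mem_u_of_mem_v hirr h.1 h.2
    omega
  have hle := Gn.ncard_inter_Sset_le_two hirr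
  have hsum := Gn.sum_ncard_inter_Sset_le hirr
  rw [Gn.ncard_eq_add_sum, Gn.ncard_inter_u_v] at hcard
  have hsum_eq : ∑ i, (Z ∩ Sset n i).ncard = ∑ _i : Fin n, 2 := by
    simp only [Finset.sum_const, Finset.card_univ, Fintype.card_fin, smul_eq_mul]
    split_ifs at hcard <;> simp_all <;> omega
  refine ⟨by split_ifs at hcard <;> simp_all, fun i => ?_⟩
  exact (Finset.sum_eq_sum_iff_of_le fun i _ => hle i).1 hsum_eq i (Finset.mem_univ i)

/-- For every `n ≥ 1`, every `IR(Gₙ)`-set contains exactly one of `u` and `v`,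
and exactly two vertices from each `Sᵢ`. -/
theorem statement7 (n : ℕ) (hn : 1 ≤ n) (Z : Set (GVert n))
    (hZ : IsIRSet (Gn n) Z) :
    ((GVert.u ∈ Z ∧ GVert.v ∉ Z) ∨ (GVert.u ∉ Z ∧ GVert.v ∈ Z)) ∧
      ∀ i : Fin n, (Z ∩ Sset n i).ncard = 2 :=
  statement7_general n Z hZ
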